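/- arXiv:2212.05778 — 2 statements merged into one kernel-verified Lean document; each statement's English description precedes it below -/
import Mathlib

section
/- Under monotonicity (T(z) ≥ T(w) pointwise) and independence of the instrument from potential outcomes and potential treatments, E[Y | Z=z] − E[Y | Z=w] = (P(z) − P(w)) · E[Y(1) − Y(0) | T(z) − T(w) = 1], where P(z) = P(T(z) = 1). Consequently, if P(z) ≠ P(w), the local average treatment effect on compliers is identified as (E[Y|Z=z] − E[Y|Z=w]) / (P(z) − P(w)). -/
open MeasureTheory ProbabilityTheory

lemma setInt_of_indep {Ω : Type*} [MeasurableSpace Ω] (μ : Measure Ω) [IsProbabilityMeasure μ]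
    (f : Ω → ℝ×ℝ×ℝ×ℝ) (Z : Ω → ℝ) (c : ℝ) (h : ℝ×ℝ×ℝ×ℝ → ℝ)
    (hindep : IndepFun f Z μ) (hh : Measurable h) (hZ : Measurable Z)
    (hint : Integrable (fun ω => h (f ω)) μ) :
    ∫ ω in {ω | Z ω = c}, h (f ω) ∂μ = (μ {ω | Z ω = c}).toReal * ∫ ω, h (f ω) ∂μ := by
  set g : ℝ → ℝ := Set.indicator {c} (fun _ => (1:ℝ)) with hg_def
  have hg : Measurable g := measurable_one.indicator (measurableSet_singleton c)
  have hA : MeasurableSet {ω | Z ω = c} := hZ (measurableSet_singleton c)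
  have hgZ : (fun ω => g (Z ω)) = Set.indicator {ω | Z ω = c} (fun _ => (1:ℝ)) := by
    funext ω
    simp only [hg_def, Set.indicator_apply, Set.mem_singleton_iff, Set.mem_setOf_eq]
  have hgint : Integrable (fun ω => g (Z ω)) μ := by
    rw [hgZ]; exact (integrable_const (1:ℝ)).indicator hA
  have hmul : ((fun ω => h (f ω)) * fun ω => g (Z ω)) =
      Set.indicator {ω | Z ω = c} (fun ω => h (f ω)) := by
    funext ω
    simp only [Pi.mul_apply, hg_def, Set.indicator_apply, Set.mem_singleton_iff,
      Set.mem_setOf_eq]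
    split_ifs <;> simp
  have hind2 : IndepFun (fun ω => h (f ω)) (fun ω => g (Z ω)) μ := hindep.comp hh hg
  have := hind2.integral_mul_eq_mul_integral hint.aestronglyMeasurable hgint.aestronglyMeasurable
  rw [hmul] at this
  rw [integral_indicator hA] at this
  rw [this, hgZ, integral_indicator hA]
  simp [mul_comm, Measure.real]

/-- Under monotonicity `T(z) ≥ T(w)` and independence of the
instrument from potential outcomes and potential treatments,
`E[Y|Z=z] − E[Y|Z=w] = (P(z) − P(w)) · E[Y(1) − Y(0) | T(z) − T(w) = 1]`;
consequently, when `P(z) > P(w)`, the LATE on compliers is identified as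
`(E[Y|Z=z] − E[Y|Z=w]) / (P(z) − P(w))`. -/
theorem late_identification
    {Ω : Type*} [MeasurableSpace Ω] (μ : Measure Ω) [IsProbabilityMeasure μ]
    (Y0 Y1 Tz Tw Z T Y : Ω → ℝ) (z w : ℝ)
    (hzw : z ≠ w)
    (hZvals : ∀ ω, Z ω = z ∨ Z ω = w)
    (hTz01 : ∀ ω, Tz ω = 0 ∨ Tz ω = 1)
    (hTw01 : ∀ ω, Tw ω = 0 ∨ Tw ω = 1)
    (hmono : ∀ᵐ ω ∂μ, Tw ω ≤ Tz ω)
    (hT : T = fun ω => if Z ω = z then Tz ω else Tw ω)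
    (hY : Y = fun ω => T ω * Y1 ω + (1 - T ω) * Y0 ω)
    (hindep : IndepFun (fun ω => (Y0 ω, Y1 ω, Tz ω, Tw ω)) Z μ)
    (hZmeas : Measurable Z) (hY0m : Measurable Y0) (hY1m : Measurable Y1)
    (hTzm : Measurable Tz) (hTwm : Measurable Tw)
    (hYint : Integrable Y μ) (hY0int : Integrable Y0 μ) (hY1int : Integrable Y1 μ)
    (hpz : 0 < μ {ω | Z ω = z}) (hpw : 0 < μ {ω | Z ω = w})
    (hPzw : (μ {ω | Tw ω = 1}).toReal < (μ {ω | Tz ω = 1}).toReal) :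
    ((∫ ω in {ω | Z ω = z}, Y ω ∂μ) / (μ {ω | Z ω = z}).toReal -
        (∫ ω in {ω | Z ω = w}, Y ω ∂μ) / (μ {ω | Z ω = w}).toReal =
      ((μ {ω | Tz ω = 1}).toReal - (μ {ω | Tw ω = 1}).toReal) *
        ((∫ ω in {ω | Tz ω = 1 ∧ Tw ω = 0}, (Y1 ω - Y0 ω) ∂μ) /
          (μ {ω | Tz ω = 1 ∧ Tw ω = 0}).toReal)) ∧
    (((∫ ω in {ω | Z ω = z}, Y ω ∂μ) / (μ {ω | Z ω = z}).toReal -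
        (∫ ω in {ω | Z ω = w}, Y ω ∂μ) / (μ {ω | Z ω = w}).toReal) /
      ((μ {ω | Tz ω = 1}).toReal - (μ {ω | Tw ω = 1}).toReal) =
        (∫ ω in {ω | Tz ω = 1 ∧ Tw ω = 0}, (Y1 ω - Y0 ω) ∂μ) /
          (μ {ω | Tz ω = 1 ∧ Tw ω = 0}).toReal) := by
  -- notation
  set A := {ω | Z ω = z} with hA_def
  set B := {ω | Z ω = w} with hB_def
  set C := {ω | Tz ω = 1 ∧ Tw ω = 0} with hC_def
  have hAm : MeasurableSet A := hZmeas (measurableSet_singleton z)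
  have hBm : MeasurableSet B := hZmeas (measurableSet_singleton w)
  have hCm : MeasurableSet C :=
    (hTzm (measurableSet_singleton 1)).inter (hTwm (measurableSet_singleton 0))
  have hfm : Measurable (fun ω => (Y0 ω, Y1 ω, Tz ω, Tw ω)) :=
    hY0m.prodMk (hY1m.prodMk (hTzm.prodMk hTwm))
  -- integrability of the two "potential" combinations
  have hTzb : ∃ Cc, ∀ ω, ‖Tz ω‖ ≤ Cc := by
    refine ⟨1, fun ω => ?_⟩; rcases hTz01 ω with h | h <;> simp [h]
  have hTwb : ∃ Cc, ∀ ω, ‖Tw ω‖ ≤ Cc := by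
    refine ⟨1, fun ω => ?_⟩; rcases hTw01 ω with h | h <;> simp [h]
  have h1Tzb : ∃ Cc, ∀ ω, ‖1 - Tz ω‖ ≤ Cc := by
    refine ⟨1, fun ω => ?_⟩; rcases hTz01 ω with h | h <;> simp [h]
  have h1Twb : ∃ Cc, ∀ ω, ‖1 - Tw ω‖ ≤ Cc := by
    refine ⟨1, fun ω => ?_⟩; rcases hTw01 ω with h | h <;> simp [h]
  have hXzint : Integrable (fun ω => Tz ω * Y1 ω + (1 - Tz ω) * Y0 ω) μ :=
    (hY1int.bdd_mul hTzm.aestronglyMeasurable (ae_of_all _ hTzb.choose_spec)).add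
      (hY0int.bdd_mul ((measurable_const.sub hTzm).aestronglyMeasurable) (ae_of_all _ h1Tzb.choose_spec))
  have hXwint : Integrable (fun ω => Tw ω * Y1 ω + (1 - Tw ω) * Y0 ω) μ :=
    (hY1int.bdd_mul hTwm.aestronglyMeasurable (ae_of_all _ hTwb.choose_spec)).add
      (hY0int.bdd_mul ((measurable_const.sub hTwm).aestronglyMeasurable) (ae_of_all _ h1Twb.choose_spec))
  -- key integral identities
  have hkeyz : ∫ ω in A, Y ω ∂μ =
      (μ A).toReal * ∫ ω, (Tz ω * Y1 ω + (1 - Tz ω) * Y0 ω) ∂μ := by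
    have h1 : ∫ ω in A, Y ω ∂μ = ∫ ω in A, (Tz ω * Y1 ω + (1 - Tz ω) * Y0 ω) ∂μ := by
      refine setIntegral_congr_fun hAm (fun ω hω => ?_)
      have hωz : Z ω = z := hω
      simp [hY, hT, hωz]
    rw [h1]
    exact setInt_of_indep μ _ Z z
      (fun p => p.2.2.1 * p.2.1 + (1 - p.2.2.1) * p.1) hindep (by fun_prop) hZmeas hXzint
  have hkeyw : ∫ ω in B, Y ω ∂μ =
      (μ B).toReal * ∫ ω, (Tw ω * Y1 ω + (1 - Tw ω) * Y0 ω) ∂μ := by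
    have h1 : ∫ ω in B, Y ω ∂μ = ∫ ω in B, (Tw ω * Y1 ω + (1 - Tw ω) * Y0 ω) ∂μ := by
      refine setIntegral_congr_fun hBm (fun ω hω => ?_)
      have hωw : Z ω = w := hω
      have : Z ω ≠ z := by rw [hωw]; exact fun hc => hzw hc.symm
      simp [hY, hT, this]
    rw [h1]
    exact setInt_of_indep μ _ Z w
      (fun p => p.2.2.2 * p.2.1 + (1 - p.2.2.2) * p.1) hindep (by fun_prop) hZmeas hXwint
  have hμA : (μ A).toReal ≠ 0 := by
    simp only [ne_eq, ENNReal.toReal_eq_zero_iff, measure_ne_top, or_false]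
    exact hpz.ne'
  have hμB : (μ B).toReal ≠ 0 := by
    simp only [ne_eq, ENNReal.toReal_eq_zero_iff, measure_ne_top, or_false]
    exact hpw.ne'
  -- difference of conditional means
  have hdiff : (∫ ω in A, Y ω ∂μ) / (μ A).toReal - (∫ ω in B, Y ω ∂μ) / (μ B).toReal
      = ∫ ω in C, (Y1 ω - Y0 ω) ∂μ := by
    rw [hkeyz, hkeyw, mul_div_cancel_left₀ _ hμA, mul_div_cancel_left₀ _ hμB,
      ← integral_sub hXzint hXwint]
    rw [← integral_indicator hCm]
    refine integral_congr_ae ?_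
    filter_upwards [hmono] with ω hm
    rcases hTz01 ω with hz1 | hz1 <;> rcases hTw01 ω with hw1 | hw1
    · simp [Set.indicator_apply, hC_def, hz1, hw1]
    · exfalso; rw [hz1, hw1] at hm; linarith
    · have hω : ω ∈ C := ⟨hz1, hw1⟩
      simp [Set.indicator_apply, hω, hz1, hw1]
    · have hω : ω ∉ C := by
        intro hc; rw [hc.2] at hw1; norm_num at hw1
      simp [Set.indicator_apply, hω, hz1, hw1]
  -- measure identity: P(z) - P(w) = μ C
  have hmeasid : (μ {ω | Tz ω = 1}).toReal - (μ {ω | Tw ω = 1}).toReal = (μ C).toReal := by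
    have hDm : MeasurableSet {ω | Tz ω = 1 ∧ Tw ω = 1} :=
      (hTzm (measurableSet_singleton 1)).inter (hTwm (measurableSet_singleton 1))
    have hunion : {ω | Tz ω = 1} = C ∪ {ω | Tz ω = 1 ∧ Tw ω = 1} := by
      ext ω
      simp only [hC_def, Set.mem_setOf_eq, Set.mem_union]
      rcases hTw01 ω with h | h <;> simp [h] <;> norm_num
    have hdisj : Disjoint C {ω | Tz ω = 1 ∧ Tw ω = 1} := by
      rw [Set.disjoint_left]
      rintro ω ⟨_, h0⟩ ⟨_, h1⟩
      rw [h0] at h1; norm_num at h1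
    have hsum : μ {ω | Tz ω = 1} = μ C + μ {ω | Tz ω = 1 ∧ Tw ω = 1} := by
      rw [hunion, measure_union hdisj hDm]
    have hDW : μ {ω | Tz ω = 1 ∧ Tw ω = 1} = μ {ω | Tw ω = 1} := by
      refine measure_congr ?_
      rw [Filter.eventuallyEq_set]
      filter_upwards [hmono] with ω hm
      simp only [Set.mem_setOf_eq, and_iff_right_iff_imp]
      intro hw1
      rcases hTz01 ω with h | h
      · rw [hw1, h] at hm; linarith
      · exact h
    rw [hsum, hDW, ENNReal.toReal_add (measure_ne_top μ _) (measure_ne_top μ _)]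
    ring
  have hCpos : 0 < (μ C).toReal := by rw [← hmeasid]; linarith
  constructor
  · rw [hdiff, hmeasid, mul_div_cancel₀ _ hCpos.ne']
  · rw [hdiff, hmeasid, div_eq_iff hCpos.ne', div_mul_cancel₀ _ hCpos.ne']
end

section
/- Under the zero-probability identification assumption, the average treatment effect on the treated among units with Z = z is identified: with A = 1{Z ∉ W}, P(T(w)=1) = 0 for w ∈ W, and instrument independence, one has E[Y | A = 0] = E[Y(0)] and E[Y | A = 1] = E[Y(0)] + P(z)·E[Y(1) − Y(0) | T(z) = 1], so that E[Y(1) − Y(0) | T(z)=1] = (E[Y|A=1] − E[Y|A=0]) / P(z) whenever P(z) > 0. -/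
open MeasureTheory ProbabilityTheory

lemma indep_set_integral {Ω : Type*} [MeasurableSpace Ω] (μ : Measure Ω)
    [IsProbabilityMeasure μ] {W : Ω → ℝ × ℝ × ℝ × ℝ} {Z : Ω → ℝ}
    (hindep : IndepFun W Z μ) (hW : Measurable W) (hZ : Measurable Z)
    (g : ℝ × ℝ × ℝ × ℝ → ℝ) (hg : Measurable g) (c : ℝ) :
    ∫ ω in {ω | Z ω = c}, g (W ω) ∂μ
      = (μ {ω | Z ω = c}).toReal * ∫ ω, g (W ω) ∂μ := by
  set h : ℝ → ℝ := Set.indicator {c} (fun _ => (1:ℝ)) with hh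
  have hhm : Measurable h := measurable_one.indicator (measurableSet_singleton c)
  have hsm : MeasurableSet {ω | Z ω = c} := hZ (measurableSet_singleton c)
  have hindep2 : IndepFun (fun ω => g (W ω)) (fun ω => h (Z ω)) μ :=
    hindep.comp hg hhm
  have key : ∫ ω, g (W ω) * h (Z ω) ∂μ
      = (∫ ω, g (W ω) ∂μ) * ∫ ω, h (Z ω) ∂μ :=
    hindep2.integral_mul_eq_mul_integral ((hg.comp hW).aestronglyMeasurable)
      ((hhm.comp hZ).aestronglyMeasurable)
  have h1 : ∫ ω in {ω | Z ω = c}, g (W ω) ∂μ = ∫ ω, g (W ω) * h (Z ω) ∂μ := by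
    rw [← integral_indicator hsm]
    congr 1
    ext ω
    by_cases hc : Z ω = c <;> simp [hh, Set.indicator, hc]
  have h2 : ∫ ω, h (Z ω) ∂μ = (μ {ω | Z ω = c}).toReal := by
    have : (fun ω => h (Z ω)) = Set.indicator {ω | Z ω = c} (fun _ => (1:ℝ)) := by
      ext ω; by_cases hc : Z ω = c <;> simp [hh, Set.indicator, hc]
    rw [this]; exact (integral_indicator_one hsm).trans (measureReal_def _ _)
  rw [h1, key, h2, mul_comm]

/-- Zero-probability identification. With an instrument taking a
value `w` on which treatment has zero probability (`P(T(w)=1) = 0`) and a value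
`z` with `P(z) = P(T(z)=1) > 0`, with `A = 1{Z = z}` (i.e. `Z ∉ W`), one has
`E[Y | A=0] = E[Y(0)]`, `E[Y | A=1] = E[Y(0)] + P(z)·E[Y(1)−Y(0) | T(z)=1]`, and
the treated-effect is identified as `(E[Y|A=1] − E[Y|A=0]) / P(z)`. -/
theorem zero_probability_identification
    {Ω : Type*} [MeasurableSpace Ω] (μ : Measure Ω) [IsProbabilityMeasure μ]
    (Y0 Y1 Tz Tw Z T Y : Ω → ℝ) (z w : ℝ)
    (hzw : z ≠ w)
    (hZvals : ∀ ω, Z ω = z ∨ Z ω = w)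
    (hTz01 : ∀ ω, Tz ω = 0 ∨ Tz ω = 1)
    (hTw01 : ∀ ω, Tw ω = 0 ∨ Tw ω = 1)
    (hTw0 : μ {ω | Tw ω = 1} = 0)
    (hT : T = fun ω => if Z ω = z then Tz ω else Tw ω)
    (hY : Y = fun ω => T ω * Y1 ω + (1 - T ω) * Y0 ω)
    (hindep : IndepFun (fun ω => (Y0 ω, Y1 ω, Tz ω, Tw ω)) Z μ)
    (hZmeas : Measurable Z) (hY0m : Measurable Y0) (hY1m : Measurable Y1)
    (hTzm : Measurable Tz) (hTwm : Measurable Tw)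
    (hYint : Integrable Y μ) (hY0int : Integrable Y0 μ) (hY1int : Integrable Y1 μ)
    (hpz : 0 < μ {ω | Z ω = z}) (hpw : 0 < μ {ω | Z ω = w})
    (hPz : 0 < (μ {ω | Tz ω = 1}).toReal) :
    ((∫ ω in {ω | Z ω = w}, Y ω ∂μ) / (μ {ω | Z ω = w}).toReal = ∫ ω, Y0 ω ∂μ) ∧
    ((∫ ω in {ω | Z ω = z}, Y ω ∂μ) / (μ {ω | Z ω = z}).toReal =
      (∫ ω, Y0 ω ∂μ) + (μ {ω | Tz ω = 1}).toReal *
        ((∫ ω in {ω | Tz ω = 1}, (Y1 ω - Y0 ω) ∂μ) / (μ {ω | Tz ω = 1}).toReal)) ∧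
    ((∫ ω in {ω | Tz ω = 1}, (Y1 ω - Y0 ω) ∂μ) / (μ {ω | Tz ω = 1}).toReal =
      ((∫ ω in {ω | Z ω = z}, Y ω ∂μ) / (μ {ω | Z ω = z}).toReal -
        (∫ ω in {ω | Z ω = w}, Y ω ∂μ) / (μ {ω | Z ω = w}).toReal) /
        (μ {ω | Tz ω = 1}).toReal) := by
  set W : Ω → ℝ × ℝ × ℝ × ℝ := fun ω => (Y0 ω, Y1 ω, Tz ω, Tw ω) with hW
  have hWm : Measurable W := hY0m.prodMk (hY1m.prodMk (hTzm.prodMk hTwm))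
  set gw : ℝ × ℝ × ℝ × ℝ → ℝ := fun p => p.2.2.2 * p.2.1 + (1 - p.2.2.2) * p.1 with hgw
  set gz : ℝ × ℝ × ℝ × ℝ → ℝ := fun p => p.2.2.1 * p.2.1 + (1 - p.2.2.1) * p.1 with hgz
  have hgwm : Measurable gw := by fun_prop
  have hgzm : Measurable gz := by fun_prop
  -- measurable sets
  have hsw : MeasurableSet {ω | Z ω = w} := hZmeas (measurableSet_singleton w)
  have hsz : MeasurableSet {ω | Z ω = z} := hZmeas (measurableSet_singleton z)
  have hsT : MeasurableSet {ω | Tz ω = 1} := hTzm (measurableSet_singleton 1)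
  -- positivity of denominators
  have hμw : (0:ℝ) < (μ {ω | Z ω = w}).toReal :=
    ENNReal.toReal_pos hpw.ne' (measure_ne_top μ _)
  have hμz : (0:ℝ) < (μ {ω | Z ω = z}).toReal :=
    ENNReal.toReal_pos hpz.ne' (measure_ne_top μ _)
  -- Tw = 0 a.e.
  have hTwae : ∀ᵐ ω ∂μ, Tw ω = 0 := by
    have hsub : {ω | Tw ω ≠ 0} ⊆ {ω | Tw ω = 1} := by
      intro ω hω; rcases hTw01 ω with h | h
      · exact absurd h hω
      · exact h
    have : μ {ω | Tw ω ≠ 0} = 0 := measure_mono_null hsub hTw0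
    simpa [ae_iff] using this
  -- step A: integral over {Z = w}
  have hA : ∫ ω in {ω | Z ω = w}, Y ω ∂μ = ∫ ω in {ω | Z ω = w}, gw (W ω) ∂μ := by
    refine setIntegral_congr_fun hsw fun ω hω => ?_
    have hne : Z ω ≠ z := by rw [hω]; exact fun h => hzw h.symm
    simp [hY, hT, hgw, hW, hne]
  have hB : ∫ ω, gw (W ω) ∂μ = ∫ ω, Y0 ω ∂μ := by
    refine integral_congr_ae ?_
    filter_upwards [hTwae] with ω h0
    simp [hgw, hW, h0]
  have E1 : ∫ ω in {ω | Z ω = w}, Y ω ∂μ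
      = (μ {ω | Z ω = w}).toReal * ∫ ω, Y0 ω ∂μ := by
    rw [hA, indep_set_integral μ hindep hWm hZmeas gw hgwm w, hB]
  -- step D: integral over {Z = z}
  have hD : ∫ ω in {ω | Z ω = z}, Y ω ∂μ = ∫ ω in {ω | Z ω = z}, gz (W ω) ∂μ := by
    refine setIntegral_congr_fun hsz fun ω hω => ?_
    simp only [Set.mem_setOf_eq] at hω
    simp [hY, hT, hgz, hW, hω]
  -- indicator identity
  have hindfun : (fun ω => Tz ω * (Y1 ω - Y0 ω))
      = Set.indicator {ω | Tz ω = 1} (fun ω => Y1 ω - Y0 ω) := by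
    funext ω
    rcases hTz01 ω with h | h
    · have : ω ∉ {ω | Tz ω = 1} := by simp [Set.mem_setOf_eq, h]
      simp [Set.indicator_of_notMem this, h]
    · have : ω ∈ {ω | Tz ω = 1} := h
      simp [Set.indicator_of_mem this, h]
  have hindint : Integrable (fun ω => Tz ω * (Y1 ω - Y0 ω)) μ := by
    rw [hindfun]; exact (hY1int.sub hY0int).indicator hsT
  have hF : ∫ ω, gz (W ω) ∂μ
      = (∫ ω, Y0 ω ∂μ) + ∫ ω in {ω | Tz ω = 1}, (Y1 ω - Y0 ω) ∂μ := by
    have hfun : (fun ω => gz (W ω))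
        = fun ω => Y0 ω + Tz ω * (Y1 ω - Y0 ω) := by
      funext ω; simp only [hgz, hW]; ring
    rw [hfun, integral_add hY0int hindint, hindfun, integral_indicator hsT]
  have E2 : ∫ ω in {ω | Z ω = z}, Y ω ∂μ
      = (μ {ω | Z ω = z}).toReal *
        ((∫ ω, Y0 ω ∂μ) + ∫ ω in {ω | Tz ω = 1}, (Y1 ω - Y0 ω) ∂μ) := by
    rw [hD, indep_set_integral μ hindep hWm hZmeas gz hgzm z, hF]
  -- conclude
  have c1 : (∫ ω in {ω | Z ω = w}, Y ω ∂μ) / (μ {ω | Z ω = w}).toReal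
      = ∫ ω, Y0 ω ∂μ := by
    rw [E1]; field_simp
  have c2 : (∫ ω in {ω | Z ω = z}, Y ω ∂μ) / (μ {ω | Z ω = z}).toReal
      = (∫ ω, Y0 ω ∂μ) + (μ {ω | Tz ω = 1}).toReal *
        ((∫ ω in {ω | Tz ω = 1}, (Y1 ω - Y0 ω) ∂μ) / (μ {ω | Tz ω = 1}).toReal) := by
    rw [E2, mul_div_cancel_left₀ _ hμz.ne', mul_div_cancel₀ _ hPz.ne']
  refine ⟨c1, c2, ?_⟩
  rw [c1, c2]
  field_simp
  ring
end
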